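/- The g-restriction of an (S,Y)-containment structure is an (S',Y)-containment structure; in particular, the restricted isolabelling remains surjective onto S', the restricted embedding remains an embedding function on the restricted display graph, and every vertex whose image under the new isolabelling lies in S' keeps the same in- and out-degrees as its image in the ambient display graph. -/

import Mathlib

namespace TreeContainment

open scoped Classical

variable {V Λ : Type}

/-- A directed graph with an explicit vertex set. -/
structure DGraph (V : Type) where
  verts : Set V
  Arc : V → V → Prop
  arc_left : ∀ ⦃u v : V⦄, Arc u v → u ∈ verts
  arc_right : ∀ ⦃u v : V⦄, Arc u v → v ∈ verts

noncomputable def DGraph.inDeg (G : DGraph V) (v : V) : ℕ := {u : V | G.Arc u v}.ncard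
noncomputable def DGraph.outDeg (G : DGraph V) (v : V) : ℕ := {u : V | G.Arc v u}.ncard
def DGraph.Acyclic (G : DGraph V) : Prop := ∀ v : V, ¬ Relation.TransGen G.Arc v v

def IsSubgraph (H G : DGraph V) : Prop :=
  H.verts ⊆ G.verts ∧ ∀ ⦃u v⦄, H.Arc u v → G.Arc u v

/-- The consecutive pairs (arcs) of a list of vertices. -/
def listArcs (p : List V) : List (V × V) := p.zip p.tail

def IsArcOf (p : List V) (a b : V) : Prop := (a, b) ∈ listArcs p

lemma isArcOf_mem_left {p : List V} {a b : V} (h : IsArcOf p a b) : a ∈ p :=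
  (List.of_mem_zip h).1

lemma isArcOf_mem_right {p : List V} {a b : V} (h : IsArcOf p a b) : b ∈ p :=
  List.mem_of_mem_tail (List.of_mem_zip h).2

/-- `p` is a directed path from `u` to `v` with respect to the arc relation `A`. -/
def DipathFrom (A : V → V → Prop) (u v : V) (p : List V) : Prop :=
  p.Chain' A ∧ p.Nodup ∧ p.head? = some u ∧ p.getLast? = some v

/-- Rooted binary phylogenetic network. -/
def IsBinPhyloNet (N : DGraph V) : Prop :=
  N.Acyclic ∧ N.verts.Finite ∧ N.verts.Nonempty ∧
  (∃! ρ, ρ ∈ N.verts ∧ N.inDeg ρ = 0) ∧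
  ∀ v ∈ N.verts,
    (N.inDeg v = 0 ∧ N.outDeg v = 2) ∨ (N.inDeg v = 1 ∧ N.outDeg v = 0) ∨
    (N.inDeg v = 2 ∧ N.outDeg v = 1) ∨ (N.inDeg v = 1 ∧ N.outDeg v = 2)

/-- Rooted binary phylogenetic tree: a binary phylogenetic network without reticulations. -/
def IsBinPhyloTree (T : DGraph V) : Prop :=
  IsBinPhyloNet T ∧ ∀ v ∈ T.verts, T.inDeg v ≤ 1

def leaves (G : DGraph V) : Set V :=
  {v : V | v ∈ G.verts ∧ G.inDeg v = 1 ∧ G.outDeg v = 0}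

/-- Equally labelled leaves of `N` and `T` are identified: the common vertices of the two
graphs are exactly the leaves of each side. -/
def SharedLeaves (N T : DGraph V) : Prop :=
  N.verts ∩ T.verts = leaves N ∧ N.verts ∩ T.verts = leaves T

/-- A witness that `H` is a subdivision of the tree `Tg`. -/
structure SubdivWitness (H Tg : DGraph V) where
  vmap : V → V
  pmap : V → V → List V
  vmap_mem : ∀ u ∈ Tg.verts, vmap u ∈ H.verts
  inj : ∀ u ∈ Tg.verts, ∀ v ∈ Tg.verts, vmap u = vmap v → u = v
  path_spec : ∀ ⦃u v⦄, Tg.Arc u v → DipathFrom H.Arc (vmap u) (vmap v) (pmap u v)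
  path_len : ∀ ⦃u v⦄, Tg.Arc u v → 2 ≤ (pmap u v).length
  internal_new : ∀ ⦃u v⦄, Tg.Arc u v → ∀ z ∈ pmap u v, z ≠ vmap u → z ≠ vmap v →
    ∀ w ∈ Tg.verts, vmap w ≠ z
  internal_disjoint : ∀ ⦃u v u' v'⦄, Tg.Arc u v → Tg.Arc u' v' → (u, v) ≠ (u', v') →
    ∀ z, z ∈ pmap u v → z ∈ pmap u' v' →
      (z = vmap u ∨ z = vmap v) ∧ (z = vmap u' ∨ z = vmap v')
  arcs_cover : ∀ a b, H.Arc a b → ∃ u v, Tg.Arc u v ∧ IsArcOf (pmap u v) a b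
  verts_cover : ∀ z ∈ H.verts, (∃ u ∈ Tg.verts, vmap u = z) ∨ ∃ u v, Tg.Arc u v ∧ z ∈ pmap u v

/-- `N` displays `T`: some subgraph of `N` is a subdivision of `T`, respecting
the (identified) leaf labels. -/
def Displays (N T : DGraph V) : Prop :=
  ∃ H : DGraph V, IsSubgraph H N ∧
    ∃ w : SubdivWitness H T, ∀ u ∈ T.verts ∩ N.verts, w.vmap u = u

/-- An embedding function of the tree `Tg` into the network `Ng`
(an embedding function on the display graph `D(Ng,Tg)`). -/
structure EmbOn (Tg Ng : DGraph V) where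
  vmap : V → V
  pmap : V → V → List V
  vmap_mem : ∀ u ∈ Tg.verts, vmap u ∈ Ng.verts
  path_spec : ∀ ⦃u v⦄, Tg.Arc u v → DipathFrom Ng.Arc (vmap u) (vmap v) (pmap u v)
  inj : ∀ u ∈ Tg.verts, ∀ v ∈ Tg.verts, vmap u = vmap v → u = v
  fixes : ∀ u ∈ Tg.verts ∩ Ng.verts, vmap u = u
  arc_disjoint : ∀ ⦃u v u' v'⦄, Tg.Arc u v → Tg.Arc u' v' → (u, v) ≠ (u', v') →
    ∀ e, e ∈ listArcs (pmap u v) → e ∉ listArcs (pmap u' v')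
  share : ∀ ⦃u v u' v'⦄, Tg.Arc u v → Tg.Arc u' v' → (u, v) ≠ (u', v') →
    ∀ z, z ∈ pmap u v → z ∈ pmap u' v' →
      ∃ w, (w = u ∨ w = v) ∧ (w = u' ∨ w = v') ∧ vmap w = z

/-- The subgraph of the network consisting of all arcs lying on some embedding path. -/
def usedSubgraph (Tg Ng : DGraph V) (φ : EmbOn Tg Ng) : DGraph V where
  verts := {z : V | ∃ u v, Tg.Arc u v ∧ z ∈ φ.pmap u v}
  Arc a b := ∃ u v, Tg.Arc u v ∧ IsArcOf (φ.pmap u v) a b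
  arc_left := by
    rintro a b ⟨u, v, huv, harc⟩
    exact ⟨u, v, huv, isArcOf_mem_left harc⟩
  arc_right := by
    rintro a b ⟨u, v, huv, harc⟩
    exact ⟨u, v, huv, isArcOf_mem_right harc⟩

/-- A display graph: a DAG whose vertex set is covered by a tree side `VT`
and a network side `VN`, satisfying the degree conditions of the paper. -/
structure DispGraph (V : Type) extends DGraph V where
  VT : Set V
  VN : Set V
  union_eq : VT ∪ VN = verts
  finite : verts.Finite
  acyclic : ∀ v : V, ¬ Relation.TransGen Arc v v
  tree_indeg : ∀ v : V, {u : V | Arc u v ∧ u ∈ VT ∧ v ∈ VT}.ncard ≤ 1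
  indeg_le : ∀ v : V, {u : V | Arc u v}.ncard ≤ 2
  outdeg_le : ∀ v : V, {u : V | Arc v u}.ncard ≤ 2
  totdeg_le : ∀ v : V, {u : V | Arc u v}.ncard + {u : V | Arc v u}.ncard ≤ 3
  shared_out : ∀ v ∈ VT ∩ VN, ∀ u, ¬ Arc v u
  shared_in_T : ∀ v ∈ VT ∩ VN, {u : V | Arc u v ∧ u ∈ VT}.ncard ≤ 1
  shared_in_N : ∀ v ∈ VT ∩ VN, {u : V | Arc u v ∧ u ∈ VN}.ncard ≤ 1

/-- The tree side of a display graph. -/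
def DispGraph.treeSide (G : DispGraph V) : DGraph V where
  verts := G.VT
  Arc u v := G.Arc u v ∧ u ∈ G.VT ∧ v ∈ G.VT
  arc_left := by intro u v h; exact h.2.1
  arc_right := by intro u v h; exact h.2.2

/-- The network side of a display graph. -/
def DispGraph.netSide (G : DispGraph V) : DGraph V where
  verts := G.VN
  Arc u v := G.Arc u v ∧ u ∈ G.VN ∧ v ∈ G.VN
  arc_left := by intro u v h; exact h.2.1
  arc_right := by intro u v h; exact h.2.2

def DispGraph.TArc (G : DispGraph V) (u v : V) : Prop := G.treeSide.Arc u v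
def DispGraph.NArc (G : DispGraph V) (u v : V) : Prop := G.netSide.Arc u v
noncomputable def DispGraph.inDeg (G : DispGraph V) : V → ℕ := G.toDGraph.inDeg
noncomputable def DispGraph.outDeg (G : DispGraph V) : V → ℕ := G.toDGraph.outDeg

/-- An embedding function on a display graph: an embedding of its tree side into
its network side. -/
abbrev EmbFun (G : DispGraph V) := EmbOn G.treeSide G.netSide

/-- The data of a containment structure: a display graph, an embedding function on it,
and an isolabelling into vertices of the ambient display graph or labels from `Λ`. -/
structure CStruct (V Λ : Type) where
  G : DispGraph V
  emb : EmbFun G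
  ι : V → V ⊕ Λ

/-- Relabelling a containment structure by a restriction function. -/
def CStruct.relabel (g : V ⊕ Λ → V ⊕ Λ) (χ : CStruct V Λ) : CStruct V Λ :=
  ⟨χ.G, χ.emb, fun v => g (χ.ι v)⟩

/-- `ι` is an `(S,Y)`-isolabelling on the display graph of `χ`, relative to the
ambient display graph `Din`. -/
def IsIsolabelling (Din : DispGraph V) (S : Set V) (Ys : Set Λ) (χ : CStruct V Λ) : Prop :=
  (∀ u ∈ χ.G.verts, (∃ s ∈ S, χ.ι u = Sum.inl s) ∨ (∃ y ∈ Ys, χ.ι u = Sum.inr y)) ∧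
  (∀ s ∈ S, ∃ u ∈ χ.G.verts, χ.ι u = Sum.inl s) ∧
  (∀ u ∈ χ.G.verts, ∀ s ∈ S, χ.ι u = Sum.inl s →
    (s ∈ Din.VN → u ∈ χ.G.VN) ∧ (s ∈ Din.VT → u ∈ χ.G.VT)) ∧
  (∀ u ∈ χ.G.verts, ∀ v ∈ χ.G.verts, ∀ s ∈ S, χ.ι u = Sum.inl s → χ.ι v = Sum.inl s → u = v) ∧
  (∀ u ∈ χ.G.verts, ∀ v ∈ χ.G.verts, ∀ s ∈ S, ∀ t ∈ S,
    χ.ι u = Sum.inl s → χ.ι v = Sum.inl t → (χ.G.Arc u v ↔ Din.Arc s t))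

/-- `χ` is an `(S,Y)`-containment structure relative to the ambient display graph `Din`. -/
def IsCS (Din : DispGraph V) (S : Set V) (Ys : Set Λ) (χ : CStruct V Λ) : Prop :=
  IsIsolabelling Din S Ys χ ∧
  (∀ u ∈ χ.G.verts, ∀ s ∈ S, χ.ι u = Sum.inl s →
    χ.G.inDeg u = Din.inDeg s ∧ χ.G.outDeg u = Din.outDeg s) ∧
  (∀ u ∈ χ.G.VT, χ.ι u ≠ χ.ι (χ.emb.vmap u) → χ.G.outDeg u = 2)

/-- A tree arc `uv` is `y`-redundant. -/
def TArcRedundant (χ : CStruct V Λ) (y : Λ) (u v : V) : Prop :=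
  χ.G.TArc u v ∧ χ.ι u = Sum.inr y ∧ χ.ι v = Sum.inr y ∧
    ∀ z ∈ χ.emb.pmap u v, χ.ι z = Sum.inr y

/-- A network arc `ab` is `y`-redundant. -/
def NArcRedundant (χ : CStruct V Λ) (y : Λ) (a b : V) : Prop :=
  χ.G.NArc a b ∧ χ.ι a = Sum.inr y ∧ χ.ι b = Sum.inr y ∧
    ∀ u v, χ.G.TArc u v → IsArcOf (χ.emb.pmap u v) a b → TArcRedundant χ y u v

def ArcRedundant (χ : CStruct V Λ) (y : Λ) (u v : V) : Prop :=
  TArcRedundant χ y u v ∨ NArcRedundant χ y u v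

/-- A tree vertex `v` is `y`-redundant. -/
def TVertRedundant (χ : CStruct V Λ) (y : Λ) (v : V) : Prop :=
  v ∈ χ.G.VT ∧ χ.ι v = Sum.inr y ∧ χ.ι (χ.emb.vmap v) = Sum.inr y ∧
  (∀ u, χ.G.Arc u v → ArcRedundant χ y u v) ∧
  (∀ u, χ.G.Arc v u → ArcRedundant χ y v u) ∧
  (∀ u, χ.G.Arc u (χ.emb.vmap v) → ArcRedundant χ y u (χ.emb.vmap v)) ∧
  (∀ u, χ.G.Arc (χ.emb.vmap v) u → ArcRedundant χ y (χ.emb.vmap v) u)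

/-- A network vertex `v` is `y`-redundant. -/
def NVertRedundant (χ : CStruct V Λ) (y : Λ) (v : V) : Prop :=
  v ∈ χ.G.VN ∧ χ.ι v = Sum.inr y ∧
  (∀ u, χ.G.Arc u v → ArcRedundant χ y u v) ∧
  (∀ u, χ.G.Arc v u → ArcRedundant χ y v u) ∧
  (∀ w ∈ χ.G.VT, χ.emb.vmap w = v → TVertRedundant χ y w)

def VertRedundant (χ : CStruct V Λ) (y : Λ) (v : V) : Prop :=
  TVertRedundant χ y v ∨ NVertRedundant χ y v

/-- `χ'` is the `g`-restriction of `χ`: relabel by `g` and delete all redundant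
arcs and vertices; the embedding and isolabelling are restricted accordingly. -/
def IsRestrictionOf (g : V ⊕ Λ → V ⊕ Λ) (χ' χ : CStruct V Λ) : Prop :=
  χ'.G.verts = χ.G.verts \ {v : V | ∃ y, VertRedundant (χ.relabel g) y v} ∧
  (∀ u v, χ'.G.Arc u v ↔ (χ.G.Arc u v ∧ ¬ ∃ y, ArcRedundant (χ.relabel g) y u v)) ∧
  χ'.G.VT = χ.G.VT ∩ χ'.G.verts ∧
  χ'.G.VN = χ.G.VN ∩ χ'.G.verts ∧
  (∀ v ∈ χ'.G.VT, χ'.emb.vmap v = χ.emb.vmap v) ∧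
  (∀ u v, χ'.G.TArc u v → χ'.emb.pmap u v = χ.emb.pmap u v) ∧
  (∀ v ∈ χ'.G.verts, χ'.ι v = g (χ.ι v))

/-- `g : S ∪ Y → S' ∪ Y` is a restriction function: identity on `S'`, mapping the rest
of `S` into `Y`, and mapping `Y` into `Y`. -/
def IsRestrictionFun (S S' : Set V) (Ys : Set Λ) (g : V ⊕ Λ → V ⊕ Λ) : Prop :=
  (∀ v ∈ S', g (Sum.inl v) = Sum.inl v) ∧
  (∀ v ∈ S, v ∉ S' → ∃ y ∈ Ys, g (Sum.inl v) = Sum.inr y) ∧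
  (∀ y ∈ Ys, ∃ y' ∈ Ys, g (Sum.inr y) = Sum.inr y')

/-- A well-behaved containment structure. -/
def WellBehaved (Din : DispGraph V) (Ys : Set Λ) (χ : CStruct V Λ) : Prop :=
  (∀ u v, χ.G.Arc u v → ¬ ∃ y ∈ Ys, ArcRedundant χ y u v) ∧
  (∀ v ∈ χ.G.verts, ¬ ∃ y ∈ Ys, VertRedundant χ y v) ∧
  (∀ u v, χ.G.Arc u v → ∀ y ∈ Ys, ∀ y' ∈ Ys,
    χ.ι u = Sum.inr y → χ.ι v = Sum.inr y' → y = y') ∧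
  (∀ u ∈ χ.G.verts, ∀ v ∈ χ.G.verts, ∀ s t : V, χ.ι u = Sum.inl s → χ.ι v = Sum.inl t →
    Relation.ReflTransGen χ.G.Arc u v → Relation.ReflTransGen Din.Arc s t)

/-- The labels used for signatures and reconciliations. -/
inductive Lab : Type where
  | past | future | left | right
deriving DecidableEq

/-- The restriction function sending every vertex of `P` to the label `y`. -/
noncomputable def sendVerts (P : Set V) (y : Lab) : V ⊕ Lab → V ⊕ Lab
  | Sum.inl v => if v ∈ P then Sum.inr y else Sum.inl v
  | Sum.inr y' => Sum.inr y'

/-- The restriction function sending `A` to label `a` and `B` to label `b`. -/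
noncomputable def sendVerts2 (A : Set V) (a : Lab) (B : Set V) (b : Lab) :
    V ⊕ Lab → V ⊕ Lab
  | Sum.inl v => if v ∈ A then Sum.inr a else if v ∈ B then Sum.inr b else Sum.inl v
  | Sum.inr y => Sum.inr y

/-- The restriction function merging all labels in `A` into the label `y`. -/
noncomputable def sendLabs (A : Set Lab) (y : Lab) : V ⊕ Lab → V ⊕ Lab
  | Sum.inl v => Sum.inl v
  | Sum.inr y' => if y' ∈ A then Sum.inr y else Sum.inr y'

/-- The restriction function sending label `a` to `ya` and label `b` to `yb`. -/
def sendTwoLabs (a ya b yb : Lab) : V ⊕ Lab → V ⊕ Lab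
  | Sum.inl v => Sum.inl v
  | Sum.inr y => if y = a then Sum.inr ya else if y = b then Sum.inr yb else Sum.inr y

/-- `(P,S,F)` is a bag of a tree decomposition of `Din`: a partition of the vertices
with `S` separating `P` from `F`. -/
def IsBag (Din : DispGraph V) (P S F : Set V) : Prop :=
  P ∪ S ∪ F = Din.verts ∧ Disjoint P S ∧ Disjoint P F ∧ Disjoint S F ∧
  ∀ u v, (Din.Arc u v ∨ Din.Arc v u) → u ∈ P → v ∈ F → False

def pfLabs : Set Lab := {Lab.past, Lab.future}
def lrfLabs : Set Lab := {Lab.left, Lab.right, Lab.future}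

/-- A signature for a bag with present `S` is an `(S,{past,future})`-containment structure. -/
def IsSignature (Din : DispGraph V) (S : Set V) (σ : CStruct V Lab) : Prop :=
  IsCS Din S pfLabs σ

/-- An `F`-partial solution for a bag `(P,S,F)` is a `(P∪S,{future})`-containment structure. -/
def IsPartialSolution (Din : DispGraph V) (P S : Set V) (ψ : CStruct V Lab) : Prop :=
  IsCS Din (P ∪ S) ({Lab.future} : Set Lab) ψ

/-- A (well-behaved) signature is valid for the bag `(P,S,F)` if it is the
`(P→past)`-restriction of a well-behaved `F`-partial solution. -/
def ValidSig (Din : DispGraph V) (P S F : Set V) (σ : CStruct V Lab) : Prop :=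
  ∃ ψ : CStruct V Lab, IsPartialSolution Din P S ψ ∧
    WellBehaved Din ({Lab.future} : Set Lab) ψ ∧
    IsRestrictionOf (sendVerts P Lab.past) σ ψ

/-- A reconciliation for a Join bag with present `S` is an
`(S,{left,right,future})`-containment structure. -/
def IsReconciliation (Din : DispGraph V) (S : Set V) (μ : CStruct V Lab) : Prop :=
  IsCS Din S lrfLabs μ

/-- A reconciliation is valid for the Join bag `(L∪R,S,F)` if it is the
`(L→left, R→right)`-restriction of a well-behaved `F`-partial solution. -/
def ValidRecon (Din : DispGraph V) (L R S F : Set V) (μ : CStruct V Lab) : Prop :=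
  ∃ ψ : CStruct V Lab, IsCS Din (L ∪ R ∪ S) ({Lab.future} : Set Lab) ψ ∧
    WellBehaved Din ({Lab.future} : Set Lab) ψ ∧
    IsRestrictionOf (sendVerts2 L Lab.left R Lab.right) μ ψ

/-- `z` is an internal vertex of the replacement path `Pm u v`. -/
def internalOf (Pm : V → V → List V) (u v z : V) : Prop :=
  z ∈ Pm u v ∧ z ≠ u ∧ z ≠ v

/-- `σ₀` is a subdivision of the containment structure `σ`, with each network
arc `uv` of `σ` replaced by the path `Pm u v`. -/
def IsSubdivisionOfCS (σ₀ σ : CStruct V Λ) (Pm : V → V → List V) : Prop :=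
  σ₀.G.VT = σ.G.VT ∧
  (∀ u v, σ₀.G.TArc u v ↔ σ.G.TArc u v) ∧
  σ.G.VN ⊆ σ₀.G.VN ∧
  σ₀.G.verts = σ.G.verts ∪ {z : V | ∃ u v, σ.G.NArc u v ∧ z ∈ Pm u v} ∧
  (∀ u v, σ.G.NArc u v → DipathFrom σ₀.G.NArc u v (Pm u v) ∧ 2 ≤ (Pm u v).length) ∧
  (∀ u v, σ.G.NArc u v → 2 < (Pm u v).length →
    ∃ y : Λ, σ.ι u = Sum.inr y ∧ σ.ι v = Sum.inr y) ∧
  (∀ u v, σ.G.NArc u v → ∀ z, internalOf Pm u v z →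
    z ∉ σ.G.verts ∧ z ∈ σ₀.G.VN ∧ σ₀.ι z = σ.ι u) ∧
  (∀ u v u' v', σ.G.NArc u v → σ.G.NArc u' v' → (u, v) ≠ (u', v') →
    ∀ z, internalOf Pm u v z → ¬ internalOf Pm u' v' z) ∧
  (∀ a b, σ₀.G.NArc a b ↔ ∃ u v, σ.G.NArc u v ∧ IsArcOf (Pm u v) a b) ∧
  (∀ v ∈ σ.G.verts, σ₀.ι v = σ.ι v) ∧
  (∀ v ∈ σ.G.VT, σ₀.emb.vmap v = σ.emb.vmap v) ∧
  (∀ u v, σ.G.TArc u v →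
    (σ₀.emb.pmap u v).head? = (σ.emb.pmap u v).head? ∧
    (σ₀.emb.pmap u v).getLast? = (σ.emb.pmap u v).getLast? ∧
    ∀ a b, IsArcOf (σ₀.emb.pmap u v) a b ↔
      ∃ c d, IsArcOf (σ.emb.pmap u v) c d ∧ IsArcOf (Pm c d) a b)

/-- `χ` has a long `y`-path: a suppressible degree-(1,1) network vertex between two
network arcs, all three vertices labelled `y`, with no tree vertex embedded into it. -/
def LongYPath (χ : CStruct V Λ) (y : Λ) : Prop :=
  ∃ x₁ x₂ x₃ : V, χ.G.NArc x₁ x₂ ∧ χ.G.NArc x₂ x₃ ∧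
    {u : V | χ.G.NArc u x₂}.ncard = 1 ∧ {u : V | χ.G.NArc x₂ u}.ncard = 1 ∧
    χ.ι x₁ = Sum.inr y ∧ χ.ι x₂ = Sum.inr y ∧ χ.ι x₃ = Sum.inr y ∧
    ∀ w ∈ χ.G.VT, χ.emb.vmap w ≠ x₂

def IsCompact (χ : CStruct V Λ) : Prop := ∀ y : Λ, ¬ LongYPath χ y

/-- `σ` is the compact form of `σ₀`: `σ` is compact and `σ₀` is a subdivision of `σ`. -/
def IsCompactFormOf (σ σ₀ : CStruct V Λ) : Prop :=
  IsCompact σ ∧ ∃ Pm : V → V → List V, IsSubdivisionOfCS σ₀ σ Pm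

/-- Isomorphism of containment structures. -/
def CSIso (χ χ' : CStruct V Λ) : Prop :=
  ∃ f : V → V, Set.BijOn f χ.G.verts χ'.G.verts ∧
    (∀ v ∈ χ.G.verts, (v ∈ χ.G.VT ↔ f v ∈ χ'.G.VT)) ∧
    (∀ v ∈ χ.G.verts, (v ∈ χ.G.VN ↔ f v ∈ χ'.G.VN)) ∧
    (∀ u ∈ χ.G.verts, ∀ v ∈ χ.G.verts, (χ.G.Arc u v ↔ χ'.G.Arc (f u) (f v))) ∧
    (∀ v ∈ χ.G.verts, χ'.ι (f v) = χ.ι v) ∧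
    (∀ v ∈ χ.G.VT, χ'.emb.vmap (f v) = f (χ.emb.vmap v)) ∧
    (∀ u v, χ.G.TArc u v → χ'.emb.pmap (f u) (f v) = (χ.emb.pmap u v).map f)

section RestrictionProof

variable {V Λ : Type} (g : V ⊕ Λ → V ⊕ Λ) (χ : CStruct V Λ)

lemma chain'_iff_isArcOf {R : V → V → Prop} : ∀ (p : List V),
    p.Chain' R ↔ ∀ a b, IsArcOf p a b → R a b
  | [] => by simp [IsArcOf, listArcs, List.Chain']
  | [x] => by simp [IsArcOf, listArcs, List.Chain']
  | x :: y :: s => by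
    have harcs : listArcs (x :: y :: s) = (x, y) :: listArcs (y :: s) := rfl
    rw [show List.Chain' R (x :: y :: s) ↔ R x y ∧ List.Chain' R (y :: s) from
      List.isChain_cons_cons, chain'_iff_isArcOf (y :: s)]
    constructor
    · rintro ⟨h1, h2⟩ a b hab
      rw [IsArcOf, harcs, List.mem_cons] at hab
      rcases hab with hab | hab
      · cases hab; exact h1
      · exact h2 a b hab
    · intro h
      refine ⟨h x y ?_, fun a b hab => h a b ?_⟩
      · rw [IsArcOf, harcs]; exact List.mem_cons_self
      · rw [IsArcOf, harcs]; exact List.mem_cons_of_mem _ hab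

lemma arcRed_labels {y : Λ} {u v : V} (h : ArcRedundant (χ.relabel g) y u v) :
    g (χ.ι u) = Sum.inr y ∧ g (χ.ι v) = Sum.inr y := by
  rcases h with h | h
  · exact ⟨h.2.1, h.2.2.1⟩
  · exact ⟨h.2.1, h.2.2.1⟩

lemma vertRed_label {y : Λ} {v : V} (h : VertRedundant (χ.relabel g) y v) :
    g (χ.ι v) = Sum.inr y := by
  rcases h with h | h
  · exact h.2.1
  · exact h.2.1

lemma vertRed_arcRed_out {y : Λ} {v w : V} (h : VertRedundant (χ.relabel g) y v)
    (ha : χ.G.Arc v w) : ArcRedundant (χ.relabel g) y v w := by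
  rcases h with h | h
  · exact h.2.2.2.2.1 w ha
  · exact h.2.2.2.1 w ha

lemma vertRed_arcRed_in {y : Λ} {v w : V} (h : VertRedundant (χ.relabel g) y w)
    (ha : χ.G.Arc v w) : ArcRedundant (χ.relabel g) y v w := by
  rcases h with h | h
  · exact h.2.2.2.1 v ha
  · exact h.2.2.1 v ha

/-- The restricted display graph: delete redundant arcs and vertices. -/
noncomputable def restrictedDG : DispGraph V where
  verts := χ.G.verts \ {v : V | ∃ y, VertRedundant (χ.relabel g) y v}
  Arc u v := χ.G.Arc u v ∧ ¬ ∃ y, ArcRedundant (χ.relabel g) y u v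
  arc_left := by
    rintro u v ⟨ha, hr⟩
    refine ⟨χ.G.arc_left ha, ?_⟩
    rintro ⟨y, hy⟩
    exact hr ⟨y, vertRed_arcRed_out g χ hy ha⟩
  arc_right := by
    rintro u v ⟨ha, hr⟩
    refine ⟨χ.G.arc_right ha, ?_⟩
    rintro ⟨y, hy⟩
    exact hr ⟨y, vertRed_arcRed_in g χ hy ha⟩
  VT := χ.G.VT ∩ (χ.G.verts \ {v : V | ∃ y, VertRedundant (χ.relabel g) y v})
  VN := χ.G.VN ∩ (χ.G.verts \ {v : V | ∃ y, VertRedundant (χ.relabel g) y v})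
  union_eq := by
    rw [← Set.union_inter_distrib_right, χ.G.union_eq]
    exact Set.inter_eq_self_of_subset_right Set.diff_subset
  finite := χ.G.finite.subset Set.diff_subset
  acyclic := fun v hv =>
    χ.G.acyclic v (Relation.TransGen.mono (fun _ _ h => h.1) v v hv)
  tree_indeg := by
    intro v
    refine le_trans (Set.ncard_le_ncard ?_ ?_) (χ.G.tree_indeg v)
    · rintro u ⟨hu, h1, h2⟩; exact ⟨hu.1, h1.1, h2.1⟩
    · exact χ.G.finite.subset fun u hu => χ.G.arc_left hu.1
  indeg_le := by
    intro v
    refine le_trans (Set.ncard_le_ncard (fun u hu => hu.1) ?_) (χ.G.indeg_le v)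
    exact χ.G.finite.subset fun u hu => χ.G.arc_left hu
  outdeg_le := by
    intro v
    refine le_trans (Set.ncard_le_ncard (fun u hu => hu.1) ?_) (χ.G.outdeg_le v)
    exact χ.G.finite.subset fun u hu => χ.G.arc_right hu
  totdeg_le := by
    intro v
    refine le_trans (add_le_add
      (Set.ncard_le_ncard (fun u hu => hu.1)
        (χ.G.finite.subset fun u hu => χ.G.arc_left hu))
      (Set.ncard_le_ncard (fun u hu => hu.1)
        (χ.G.finite.subset fun u hu => χ.G.arc_right hu))) (χ.G.totdeg_le v)
  shared_out := by
    rintro v ⟨hT, hN⟩ u ⟨ha, _⟩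
    exact χ.G.shared_out v ⟨hT.1, hN.1⟩ u ha
  shared_in_T := by
    rintro v ⟨hT, hN⟩
    refine le_trans (Set.ncard_le_ncard ?_ ?_) (χ.G.shared_in_T v ⟨hT.1, hN.1⟩)
    · rintro u ⟨hu, h1⟩; exact ⟨hu.1, h1.1⟩
    · exact χ.G.finite.subset fun u hu => χ.G.arc_left hu.1
  shared_in_N := by
    rintro v ⟨hT, hN⟩
    refine le_trans (Set.ncard_le_ncard ?_ ?_) (χ.G.shared_in_N v ⟨hT.1, hN.1⟩)
    · rintro u ⟨hu, h1⟩; exact ⟨hu.1, h1.1⟩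
    · exact χ.G.finite.subset fun u hu => χ.G.arc_left hu.1

/-- The restricted containment structure. -/
noncomputable def restrictedCS : CStruct V Λ where
  G := restrictedDG g χ
  ι := fun v => g (χ.ι v)
  emb :=
  { vmap := χ.emb.vmap
    pmap := χ.emb.pmap
    vmap_mem := by
      rintro u ⟨huT, huv, hur⟩
      have hm : χ.emb.vmap u ∈ χ.G.VN := χ.emb.vmap_mem u huT
      have hmem : χ.emb.vmap u ∈ χ.G.verts := by
        rw [← χ.G.union_eq]; exact Set.mem_union_right _ hm
      refine ⟨hm, hmem, ?_⟩
      rintro ⟨y, hT | hN⟩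
      · have hfix : χ.emb.vmap (χ.emb.vmap u) = χ.emb.vmap u :=
          χ.emb.fixes (χ.emb.vmap u) ⟨hT.1, hm⟩
        have heq : u = χ.emb.vmap u :=
          χ.emb.inj u huT (χ.emb.vmap u) hT.1 hfix.symm
        rw [← heq] at hT
        exact hur ⟨y, Or.inl hT⟩
      · exact hur ⟨y, Or.inl (hN.2.2.2.2 u huT rfl)⟩
    path_spec := by
      rintro u v ⟨⟨harc, hnred⟩, huT, hvT⟩
      have hTuv : χ.G.treeSide.Arc u v := ⟨harc, huT.1, hvT.1⟩
      obtain ⟨hch, hnd, hhd, hlast⟩ := χ.emb.path_spec hTuv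
      refine ⟨?_, hnd, hhd, hlast⟩
      rw [chain'_iff_isArcOf] at hch ⊢
      intro a b hab
      have hN : χ.G.netSide.Arc a b := hch a b hab
      have hnr : ¬ ∃ y, ArcRedundant (χ.relabel g) y a b := by
        rintro ⟨y, hr | hr⟩
        · exact χ.G.shared_out a ⟨hr.1.2.1, hN.2.1⟩ b hr.1.1
        · exact hnred ⟨y, Or.inl (hr.2.2.2 u v hTuv hab)⟩
      have ha' : a ∈ χ.G.verts \ {v : V | ∃ y, VertRedundant (χ.relabel g) y v} := by
        refine ⟨χ.G.arc_left hN.1, ?_⟩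
        rintro ⟨y, hy⟩
        exact hnr ⟨y, vertRed_arcRed_out g χ hy hN.1⟩
      have hb' : b ∈ χ.G.verts \ {v : V | ∃ y, VertRedundant (χ.relabel g) y v} := by
        refine ⟨χ.G.arc_right hN.1, ?_⟩
        rintro ⟨y, hy⟩
        exact hnr ⟨y, vertRed_arcRed_in g χ hy hN.1⟩
      exact ⟨⟨hN.1, hnr⟩, ⟨hN.2.1, ha'⟩, ⟨hN.2.2, hb'⟩⟩
    inj := fun u hu v hv h => χ.emb.inj u hu.1 v hv.1 h
    fixes := fun u hu => χ.emb.fixes u ⟨hu.1.1, hu.2.1⟩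
    arc_disjoint := by
      rintro u v u' v' h1 h2 hne e he
      exact χ.emb.arc_disjoint ⟨h1.1.1, h1.2.1.1, h1.2.2.1⟩
        ⟨h2.1.1, h2.2.1.1, h2.2.2.1⟩ hne e he
    share := by
      rintro u v u' v' h1 h2 hne z hz hz'
      exact χ.emb.share ⟨h1.1.1, h1.2.1.1, h1.2.2.1⟩
        ⟨h2.1.1, h2.2.1.1, h2.2.2.1⟩ hne z hz hz' }

end RestrictionProof

/-- The `g`-restriction of an `(S,Y)`-containment structure is an
`(S',Y)`-containment structure (the restricted isolabelling is surjective onto `S'`,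
the restricted embedding is an embedding function, and `S'`-labelled vertices keep
the same in- and out-degrees as their images in the ambient display graph). -/
theorem restriction_isCS {V Λ : Type} (Din : DispGraph V) (S S' : Set V) (Ys : Set Λ)
    (hS' : S' ⊆ S) (g : V ⊕ Λ → V ⊕ Λ) (hg : IsRestrictionFun S S' Ys g)
    (χ : CStruct V Λ) (hχ : IsCS Din S Ys χ) :
    ∃ χ' : CStruct V Λ, IsRestrictionOf g χ' χ ∧ IsCS Din S' Ys χ' := by

  obtain ⟨⟨hL1, hL2, hL3, hL4, hL5⟩, hdeg, hout2⟩ := hχ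
  -- key: if the restricted label of a vertex is `inl s` with `s ∈ S'`, so was the original.
  have hkey : ∀ u s, s ∈ S' → u ∈ χ.G.verts → g (χ.ι u) = Sum.inl s →
      χ.ι u = Sum.inl s := by
    intro u s hs hu h
    rcases hL1 u hu with ⟨t, ht, hι⟩ | ⟨y, hy, hι⟩
    · by_cases hts : t ∈ S'
      · rw [hι, hg.1 t hts] at h
        injection h with h
        rw [hι, h]
      · obtain ⟨y, hyY, hgy⟩ := hg.2.1 t ht hts
        rw [hι, hgy] at h
        exact absurd h (by simp)
    · obtain ⟨y', hy', hgy⟩ := hg.2.2 y hy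
      rw [hι, hgy] at h
      exact absurd h (by simp)
  refine ⟨restrictedCS g χ, ⟨rfl, fun u v => Iff.rfl, rfl, rfl, fun v _ => rfl,
    fun u v _ => rfl, fun v _ => rfl⟩, ⟨?_, ?_, ?_, ?_, ?_⟩, ?_, ?_⟩
  · -- labels in S' ∪ Ys
    intro u hu
    rcases hL1 u hu.1 with ⟨s, hsS, hι⟩ | ⟨y, hy, hι⟩
    · by_cases hs' : s ∈ S'
      · exact Or.inl ⟨s, hs', by show g (χ.ι u) = _; rw [hι, hg.1 s hs']⟩
      · obtain ⟨y, hyY, hgy⟩ := hg.2.1 s hsS hs'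
        exact Or.inr ⟨y, hyY, by show g (χ.ι u) = _; rw [hι, hgy]⟩
    · obtain ⟨y', hy', hgy⟩ := hg.2.2 y hy
      exact Or.inr ⟨y', hy', by show g (χ.ι u) = _; rw [hι, hgy]⟩
  · -- surjectivity onto S'
    intro s hs
    obtain ⟨u, hu, hι⟩ := hL2 s (hS' hs)
    have hg' : g (χ.ι u) = Sum.inl s := by rw [hι, hg.1 s hs]
    refine ⟨u, ⟨hu, ?_⟩, hg'⟩
    rintro ⟨y, hy⟩
    exact absurd (hg'.symm.trans (vertRed_label g χ hy)) (by simp)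
  · -- network/tree side respected
    intro u hu s hs h
    have hι := hkey u s hs hu.1 h
    have h3 := hL3 u hu.1 s (hS' hs) hι
    exact ⟨fun hN => ⟨h3.1 hN, hu⟩, fun hT => ⟨h3.2 hT, hu⟩⟩
  · -- injectivity on S'
    intro u hu v hv s hs h1 h2
    exact hL4 u hu.1 v hv.1 s (hS' hs) (hkey u s hs hu.1 h1) (hkey v s hs hv.1 h2)
  · -- arcs between S'-labelled vertices
    intro u hu v hv s hs t ht h1 h2
    have base := hL5 u hu.1 v hv.1 s (hS' hs) t (hS' ht)
      (hkey u s hs hu.1 h1) (hkey v t ht hv.1 h2)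
    constructor
    · intro h; exact base.1 h.1
    · intro h
      refine ⟨base.2 h, ?_⟩
      rintro ⟨y, hy⟩
      exact absurd (h1.symm.trans (arcRed_labels g χ hy).1) (by simp)
  · -- degrees preserved for S'-labelled vertices
    intro u hu s hs h
    have hι := hkey u s hs hu.1 h
    have hd := hdeg u hu.1 s (hS' hs) hι
    have ein : {w : V | (restrictedCS g χ).G.Arc w u} = {w : V | χ.G.Arc w u} := by
      ext w
      simp only [Set.mem_setOf_eq]
      refine ⟨fun hw => hw.1, fun hw => ⟨hw, ?_⟩⟩
      rintro ⟨y, hy⟩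
      exact absurd (h.symm.trans (arcRed_labels g χ hy).2) (by simp)
    have eout : {w : V | (restrictedCS g χ).G.Arc u w} = {w : V | χ.G.Arc u w} := by
      ext w
      simp only [Set.mem_setOf_eq]
      refine ⟨fun hw => hw.1, fun hw => ⟨hw, ?_⟩⟩
      rintro ⟨y, hy⟩
      exact absurd (h.symm.trans (arcRed_labels g χ hy).1) (by simp)
    constructor
    · show {w : V | (restrictedCS g χ).G.Arc w u}.ncard = _
      rw [ein]; exact hd.1
    · show {w : V | (restrictedCS g χ).G.Arc u w}.ncard = _
      rw [eout]; exact hd.2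
  · -- tree vertices with moved labels have out-degree 2
    intro u hu h
    have h' : χ.ι u ≠ χ.ι (χ.emb.vmap u) := fun e => h (congrArg g e)
    have h2 := hout2 u hu.1 h'
    have eout : {w : V | (restrictedCS g χ).G.Arc u w} = {w : V | χ.G.Arc u w} := by
      ext w
      simp only [Set.mem_setOf_eq]
      refine ⟨fun hw => hw.1, fun hw => ⟨hw, ?_⟩⟩
      rintro ⟨y, hy | hy⟩
      · have hhd := (χ.emb.path_spec hy.1).2.2.1
        have hmem : χ.emb.vmap u ∈ χ.emb.pmap u w := List.mem_of_mem_head? (by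
          rw [hhd]; exact rfl)
        have := hy.2.2.2 (χ.emb.vmap u) hmem
        exact h (hy.2.1.trans this.symm)
      · exact χ.G.shared_out u ⟨hu.1, hy.1.2.1⟩ w hy.1.1
    show {w : V | (restrictedCS g χ).G.Arc u w}.ncard = 2
    rw [eout]; exact h2


end TreeContainment
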